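/- arXiv:math/0406274 — 2 statements merged into one kernel-verified Lean document; each statement's English description precedes it below -/
import Mathlib

section
/- Let D be a Lie algebra over a field of characteristic zero equipped with a nondegenerate invariant symmetric bilinear form ⟨⟨·,·⟩⟩, and let D = K ⊕ K* be a decomposition into two isotropic Lie subalgebras (a Manin triple). Suppose K = H ⊕ M is a direct sum decomposition of vector spaces such that H is a Lie subalgebra of K with [H,M] ⊆ M, and write K* = H* ⊕ M* where H* = M^⊥ ∩ K* and M* = H^⊥ ∩ K* (orthogonal complements with respect to the pairing between K and K*). If H* is a Lie subalgebra of K* and M* is a Lie ideal of K*, then [H*, H] ⊆ H ⊕ H*; that is, H + H* is a Lie subalgebra of D. -/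
/-!
Write `D = H + M + H* + M*`. Isotropy of `K` and `K*` together with the definitions of `H*` and
`M*` make `H` pair only with `H*` and `M` only with `M*`, so by nondegeneracy every vector
orthogonal to `M ⊕ M*` lies in `H ⊕ H*`. For `ξ ∈ H*` and `h ∈ H`, invariance gives
`⟨⟨[ξ, h], m⟩⟩ = ⟨⟨ξ, [h, m]⟩⟩ = 0` since `[H, M] ⊆ M`, and
`⟨⟨[ξ, h], η⟩⟩ = -⟨⟨h, [ξ, η]⟩⟩ = 0` since `M*` is an ideal of `K*`.
-/

lemma eq_zero_of_top_le_ker {k D : Type*} [Field k] [AddCommGroup D] [Module k D]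
    (B : D →ₗ[k] D →ₗ[k] k) (hBnd : ∀ x, (∀ y, B x y = 0) → x = 0) {z : D}
    (hz : ⊤ ≤ LinearMap.ker (B z)) : z = 0 :=
  hBnd z fun _ => hz Submodule.mem_top

lemma mem_sup_of_sup_le_ker {k D : Type*} [Field k] [AddCommGroup D] [Module k D]
    (B : D →ₗ[k] D →ₗ[k] k) (hBsymm : ∀ x y, B x y = B y x)
    (hBnd : ∀ x, (∀ y, B x y = 0) → x = 0)
    {K Ks : Submodule k D} (hKiso : ∀ x ∈ K, ∀ y ∈ K, B x y = 0)
    (hKsiso : ∀ x ∈ Ks, ∀ y ∈ Ks, B x y = 0) (hcod : K ⊔ Ks = ⊤)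
    {H M : Submodule k D} (hHMsup : H ⊔ M = K)
    {Hs Ms : Submodule k D}
    (hHs : ∀ x, x ∈ Hs ↔ x ∈ Ks ∧ ∀ m ∈ M, B x m = 0)
    (hMs : ∀ x, x ∈ Ms ↔ x ∈ Ks ∧ ∀ h ∈ H, B x h = 0)
    (hKssup : Hs ⊔ Ms = Ks) {z : D} (hz : M ⊔ Ms ≤ LinearMap.ker (B z)) :
    z ∈ H ⊔ Hs := by
  have hzmem : z ∈ (H ⊔ M) ⊔ (Hs ⊔ Ms) := by
    rw [hHMsup, hKssup, hcod]; exact Submodule.mem_top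
  obtain ⟨c, hc, κ, hκ, rfl⟩ := Submodule.mem_sup.mp hzmem
  obtain ⟨a, ha, b, hb, rfl⟩ := Submodule.mem_sup.mp hc
  obtain ⟨α, hα, β, hβ, rfl⟩ := Submodule.mem_sup.mp hκ
  have hHK : H ≤ K := hHMsup ▸ le_sup_left
  have hMK : M ≤ K := hHMsup ▸ le_sup_right
  have hHsKs : Hs ≤ Ks := hKssup ▸ le_sup_left
  have hMsKs : Ms ≤ Ks := hKssup ▸ le_sup_right
  have hz_apply : ∀ y ∈ M ⊔ Ms, B a y + B b y + (B α y + B β y) = 0 := fun y hy => by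
    simpa only [LinearMap.mem_ker, map_add, LinearMap.add_apply] using hz hy
  have hb0 : b = 0 := eq_zero_of_top_le_ker B hBnd <| by
    rw [← hcod, ← hKssup, ← sup_assoc]
    refine sup_le (sup_le (fun y hy => hKiso b (hMK hb) y hy) fun y hy => ?_) fun η hη => ?_
    · rw [LinearMap.mem_ker, hBsymm]; exact ((hHs y).1 hy).2 b hb
    · have := hz_apply η (Submodule.mem_sup_right hη)
      rwa [hBsymm a, ((hMs η).1 hη).2 a ha, hKsiso α (hHsKs hα) η (hMsKs hη),
        hKsiso β (hMsKs hβ) η (hMsKs hη), zero_add, add_zero, add_zero] at this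
  have hβ0 : β = 0 := eq_zero_of_top_le_ker B hBnd <| by
    rw [← hcod, ← hHMsup]
    refine sup_le (sup_le (fun y hy => ((hMs β).1 hβ).2 y hy) fun m hm => ?_)
      fun y hy => hKsiso β (hMsKs hβ) y hy
    have := hz_apply m (Submodule.mem_sup_left hm)
    rwa [hKiso a (hHK ha) m (hMK hm), hKiso b (hMK hb) m (hMK hm),
      ((hHs α).1 hα).2 m hm, zero_add, zero_add, zero_add] at this
  rw [hb0, hβ0, add_zero, add_zero]
  exact Submodule.add_mem_sup ha hα

theorem manin_H_Hstar_subalgebra_general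
    {k : Type*} [Field k]
    {D : Type*} [LieRing D] [LieAlgebra k D]
    (B : D →ₗ[k] D →ₗ[k] k)
    (hBsymm : ∀ x y, B x y = B y x)
    (hBinv : ∀ x y z, B ⁅x, y⁆ z = B x ⁅y, z⁆)
    (hBnd : ∀ x, (∀ y, B x y = 0) → x = 0)
    (K Ks : Submodule k D)
    (hKiso : ∀ x ∈ K, ∀ y ∈ K, B x y = 0)
    (hKsiso : ∀ x ∈ Ks, ∀ y ∈ Ks, B x y = 0)
    (hdir : IsCompl K Ks)
    (H M : Submodule k D)
    (hHMsup : H ⊔ M = K)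
    (hHMbr : ∀ x ∈ H, ∀ y ∈ M, ⁅x, y⁆ ∈ M)
    (Hs Ms : Submodule k D)
    (hHs : ∀ x, x ∈ Hs ↔ x ∈ Ks ∧ ∀ m ∈ M, B x m = 0)
    (hMs : ∀ x, x ∈ Ms ↔ x ∈ Ks ∧ ∀ h ∈ H, B x h = 0)
    (hKssup : Hs ⊔ Ms = Ks)
    (hMsideal : ∀ x ∈ Ks, ∀ y ∈ Ms, ⁅x, y⁆ ∈ Ms) :
    ∀ x ∈ Hs, ∀ y ∈ H, ⁅x, y⁆ ∈ H ⊔ Hs := by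
  intro ξ hξ h hh
  obtain ⟨hξKs, hξM⟩ := (hHs ξ).1 hξ
  refine mem_sup_of_sup_le_ker B hBsymm hBnd hKiso hKsiso hdir.codisjoint.eq_top hHMsup hHs hMs
    hKssup (sup_le (fun m hm => ?_) fun η hη => ?_)
  · rw [LinearMap.mem_ker, hBinv]
    exact hξM _ (hHMbr h hh m hm)
  · rw [LinearMap.mem_ker, ← lie_skew, map_neg, LinearMap.neg_apply, hBinv, hBsymm,
      ((hMs _).1 (hMsideal ξ hξKs η hη)).2 h hh, neg_zero]

/-- In a Manin triple `D = K ⊕ K*` with `K = H ⊕ M`, `H` a subalgebra,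
`[H,M] ⊆ M`, `H* = M^⊥ ∩ K*` a subalgebra and `M* = H^⊥ ∩ K*` an ideal of `K*`,
one has `[H*, H] ⊆ H ⊕ H*`, i.e. `H + H*` is a Lie subalgebra of `D`. -/
theorem manin_H_Hstar_subalgebra
    {k : Type*} [Field k] [CharZero k]
    {D : Type*} [LieRing D] [LieAlgebra k D]
    (B : D →ₗ[k] D →ₗ[k] k)
    (hBsymm : ∀ x y, B x y = B y x)
    (hBinv : ∀ x y z, B ⁅x, y⁆ z = B x ⁅y, z⁆)
    (hBnd : ∀ x, (∀ y, B x y = 0) → x = 0)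
    (K Ks : Submodule k D)
    (hKsub : ∀ x ∈ K, ∀ y ∈ K, ⁅x, y⁆ ∈ K)
    (hKssub : ∀ x ∈ Ks, ∀ y ∈ Ks, ⁅x, y⁆ ∈ Ks)
    (hKiso : ∀ x ∈ K, ∀ y ∈ K, B x y = 0)
    (hKsiso : ∀ x ∈ Ks, ∀ y ∈ Ks, B x y = 0)
    (hdir : IsCompl K Ks)
    (H M : Submodule k D) (hHK : H ≤ K) (hMK : M ≤ K)
    (hHMinf : H ⊓ M = ⊥) (hHMsup : H ⊔ M = K)
    (hHsub : ∀ x ∈ H, ∀ y ∈ H, ⁅x, y⁆ ∈ H)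
    (hHMbr : ∀ x ∈ H, ∀ y ∈ M, ⁅x, y⁆ ∈ M)
    (Hs Ms : Submodule k D)
    (hHs : ∀ x, x ∈ Hs ↔ x ∈ Ks ∧ ∀ m ∈ M, B x m = 0)
    (hMs : ∀ x, x ∈ Ms ↔ x ∈ Ks ∧ ∀ h ∈ H, B x h = 0)
    (hKsinf : Hs ⊓ Ms = ⊥) (hKssup : Hs ⊔ Ms = Ks)
    (hHssub : ∀ x ∈ Hs, ∀ y ∈ Hs, ⁅x, y⁆ ∈ Hs)
    (hMsideal : ∀ x ∈ Ks, ∀ y ∈ Ms, ⁅x, y⁆ ∈ Ms) :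
    ∀ x ∈ Hs, ∀ y ∈ H, ⁅x, y⁆ ∈ H ⊔ Hs :=
  manin_H_Hstar_subalgebra_general B hBsymm hBinv hBnd K Ks hKiso hKsiso hdir H M hHMsup hHMbr Hs Ms
    hHs hMs hKssup hMsideal
end

section
/- With the setup of a Manin triple D = K ⊕ K*, decompositions K = H ⊕ M and K* = H* ⊕ M* with H* = M^⊥ ∩ K*, M* = H^⊥ ∩ K*, [H,M] ⊆ M, H* a subalgebra and M* an ideal of K*: the subspace H ⊕ H* of D, equipped with the restricted Lie bracket of D and the restricted bilinear form, is itself a Manin triple, i.e., H and H* are isotropic Lie subalgebras of H ⊕ H* and the restricted form is nondegenerate on H ⊕ H*. -/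
/-!
Split `D = P ⊕ Q` with `P = H ⊕ H*` and `Q = M ⊕ M*`. The four pieces pair to zero across
`P` and `Q` (isotropy of `K` and `K*` and the definitions of `H*` and `M*`), so by
nondegeneracy `P` is exactly the annihilator of `Q`. Invariance of the form, `[H, M] ⊆ M` and
`[K*, M*] ⊆ M*` show that `[H, H*]` annihilates `Q`, hence lies in `P`; together with `H` and
`H*` being subalgebras this closes `P` under the bracket. Nondegeneracy on `P` holds because an
element of `P` orthogonal to `P` is orthogonal to `P ⊕ Q = D`.
-/

section Orthogonal

variable {R D : Type*} [CommRing R] [AddCommGroup D] [Module R D] (B : D →ₗ[R] D →ₗ[R] R)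

theorem eq_zero_of_apply_eq_zero_of_sup_eq_top (hBnd : ∀ x, (∀ y, B x y = 0) → x = 0)
    {P Q : Submodule R D} (hPQ : P ⊔ Q = ⊤) {x : D}
    (hP : ∀ p ∈ P, B x p = 0) (hQ : ∀ q ∈ Q, B x q = 0) : x = 0 := by
  refine hBnd x fun y => ?_
  obtain ⟨p, hp, q, hq, rfl⟩ := Submodule.mem_sup.mp (hPQ ▸ Submodule.mem_top : y ∈ P ⊔ Q)
  rw [map_add, hP p hp, hQ q hq, add_zero]

theorem mem_of_apply_eq_zero_of_sup_eq_top (hBsymm : ∀ x y, B x y = B y x)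
    (hBnd : ∀ x, (∀ y, B x y = 0) → x = 0) {P Q : Submodule R D} (hPQ : P ⊔ Q = ⊤)
    (horth : ∀ p ∈ P, ∀ q ∈ Q, B p q = 0) {x : D} (hx : ∀ q ∈ Q, B x q = 0) : x ∈ P := by
  obtain ⟨p, hp, q, hq, rfl⟩ := Submodule.mem_sup.mp (hPQ ▸ Submodule.mem_top : x ∈ P ⊔ Q)
  suffices q = 0 by rwa [this, add_zero]
  refine eq_zero_of_apply_eq_zero_of_sup_eq_top B hBnd hPQ
    (fun p' hp' => by rw [hBsymm]; exact horth p' hp' q hq) fun q' hq' => ?_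
  have := hx q' hq'
  rwa [map_add, LinearMap.add_apply, horth p hp q' hq', zero_add] at this

theorem apply_eq_zero_of_mem_sup_of_mem_sup {A C E F : Submodule R D}
    (hAE : ∀ a ∈ A, ∀ e ∈ E, B a e = 0) (hAF : ∀ a ∈ A, ∀ f ∈ F, B a f = 0)
    (hCE : ∀ c ∈ C, ∀ e ∈ E, B c e = 0) (hCF : ∀ c ∈ C, ∀ f ∈ F, B c f = 0)
    {x y : D} (hx : x ∈ A ⊔ C) (hy : y ∈ E ⊔ F) : B x y = 0 := by
  obtain ⟨a, ha, c, hc, rfl⟩ := Submodule.mem_sup.mp hx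
  obtain ⟨e, he, f, hf, rfl⟩ := Submodule.mem_sup.mp hy
  simp only [map_add, LinearMap.add_apply, hAE a ha e he, hAF a ha f hf, hCE c hc e he,
    hCF c hc f hf, add_zero]

end Orthogonal

section Lie

variable {R L : Type*} [CommRing R] [LieRing L] [LieAlgebra R L]

theorem lie_mem_sup_of_lie_mem {A C : Submodule R L}
    (hA : ∀ x ∈ A, ∀ y ∈ A, ⁅x, y⁆ ∈ A) (hC : ∀ x ∈ C, ∀ y ∈ C, ⁅x, y⁆ ∈ C)
    (hAC : ∀ x ∈ A, ∀ y ∈ C, ⁅x, y⁆ ∈ A ⊔ C) :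
    ∀ x ∈ A ⊔ C, ∀ y ∈ A ⊔ C, ⁅x, y⁆ ∈ A ⊔ C := by
  intro x hx y hy
  obtain ⟨a, ha, c, hc, rfl⟩ := Submodule.mem_sup.mp hx
  obtain ⟨a', ha', c', hc', rfl⟩ := Submodule.mem_sup.mp hy
  have hca' : ⁅c, a'⁆ ∈ A ⊔ C := by
    rw [← lie_skew]
    exact neg_mem (hAC a' ha' c hc)
  simp only [add_lie, lie_add]
  exact add_mem (add_mem (Submodule.mem_sup_left (hA a ha a' ha')) hca')
    (add_mem (hAC a ha c' hc') (Submodule.mem_sup_right (hC c hc c' hc')))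

variable (B : L →ₗ[R] L →ₗ[R] R)

theorem apply_lie_eq_zero_of_mem_sup (hBsymm : ∀ x y, B x y = B y x)
    (hBinv : ∀ x y z, B ⁅x, y⁆ z = B x ⁅y, z⁆) {H M Hs Ms : Submodule R L}
    (hHMbr : ∀ x ∈ H, ∀ y ∈ M, ⁅x, y⁆ ∈ M) (hHsMs : ∀ x ∈ Hs, ∀ y ∈ Ms, ⁅x, y⁆ ∈ Ms)
    (hHsM : ∀ x ∈ Hs, ∀ m ∈ M, B x m = 0) (hMsH : ∀ x ∈ Ms, ∀ h ∈ H, B x h = 0)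
    {h ξ : L} (hh : h ∈ H) (hξ : ξ ∈ Hs) : ∀ q ∈ M ⊔ Ms, B ⁅h, ξ⁆ q = 0 := by
  intro q hq
  obtain ⟨m, hm, s, hs, rfl⟩ := Submodule.mem_sup.mp hq
  have hBm : B ⁅h, ξ⁆ m = 0 := by
    rw [← lie_skew, map_neg, LinearMap.neg_apply, hBinv, hHsM ξ hξ _ (hHMbr h hh m hm), neg_zero]
  have hBs : B ⁅h, ξ⁆ s = 0 := by
    rw [hBinv, hBsymm]
    exact hMsH _ (hHsMs ξ hξ s hs) h hh
  rw [map_add, hBm, hBs, add_zero]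

end Lie

theorem manin_H_Hstar_is_manin_triple_general
    {k : Type*} [Field k]
    {D : Type*} [LieRing D] [LieAlgebra k D]
    (B : D →ₗ[k] D →ₗ[k] k)
    (hBsymm : ∀ x y, B x y = B y x)
    (hBinv : ∀ x y z, B ⁅x, y⁆ z = B x ⁅y, z⁆)
    (hBnd : ∀ x, (∀ y, B x y = 0) → x = 0)
    (K Ks : Submodule k D)
    (hKiso : ∀ x ∈ K, ∀ y ∈ K, B x y = 0)
    (hKsiso : ∀ x ∈ Ks, ∀ y ∈ Ks, B x y = 0)
    (hdir : IsCompl K Ks)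
    (H M : Submodule k D) (hHK : H ≤ K) (hMK : M ≤ K)
    (hHMsup : H ⊔ M = K)
    (hHsub : ∀ x ∈ H, ∀ y ∈ H, ⁅x, y⁆ ∈ H)
    (hHMbr : ∀ x ∈ H, ∀ y ∈ M, ⁅x, y⁆ ∈ M)
    (Hs Ms : Submodule k D)
    (hHs : ∀ x, x ∈ Hs ↔ x ∈ Ks ∧ ∀ m ∈ M, B x m = 0)
    (hMs : ∀ x, x ∈ Ms ↔ x ∈ Ks ∧ ∀ h ∈ H, B x h = 0)
    (hKssup : Hs ⊔ Ms = Ks)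
    (hHssub : ∀ x ∈ Hs, ∀ y ∈ Hs, ⁅x, y⁆ ∈ Hs)
    (hMsideal : ∀ x ∈ Ks, ∀ y ∈ Ms, ⁅x, y⁆ ∈ Ms) :
    (∀ x ∈ H, ∀ y ∈ H, B x y = 0 ∧ ⁅x, y⁆ ∈ H) ∧
    (∀ x ∈ Hs, ∀ y ∈ Hs, B x y = 0 ∧ ⁅x, y⁆ ∈ Hs) ∧
    (∀ x ∈ H ⊔ Hs, ∀ y ∈ H ⊔ Hs, ⁅x, y⁆ ∈ H ⊔ Hs) ∧
    (∀ x ∈ H ⊔ Hs, (∀ y ∈ H ⊔ Hs, B x y = 0) → x = 0) := by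
  have hHsKs : Hs ≤ Ks := fun x hx => ((hHs x).mp hx).1
  have hMsKs : Ms ≤ Ks := fun x hx => ((hMs x).mp hx).1
  have hHsM : ∀ x ∈ Hs, ∀ m ∈ M, B x m = 0 := fun x hx => ((hHs x).mp hx).2
  have hMsH : ∀ x ∈ Ms, ∀ h ∈ H, B x h = 0 := fun x hx => ((hMs x).mp hx).2
  have hPQ : (H ⊔ Hs) ⊔ (M ⊔ Ms) = ⊤ := by
    rw [sup_sup_sup_comm, hHMsup, hKssup, hdir.sup_eq_top]
  have horth : ∀ p ∈ H ⊔ Hs, ∀ q ∈ M ⊔ Ms, B p q = 0 := fun p hp q hq =>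
    apply_eq_zero_of_mem_sup_of_mem_sup B
      (fun x hx y hy => hKiso x (hHK hx) y (hMK hy))
      (fun x hx y hy => by rw [hBsymm]; exact hMsH y hy x hx) hHsM
      (fun x hx y hy => hKsiso x (hHsKs hx) y (hMsKs hy)) hp hq
  have hHHs : ∀ h ∈ H, ∀ ξ ∈ Hs, ⁅h, ξ⁆ ∈ H ⊔ Hs := fun h hh ξ hξ =>
    mem_of_apply_eq_zero_of_sup_eq_top B hBsymm hBnd hPQ horth <|
      apply_lie_eq_zero_of_mem_sup B hBsymm hBinv hHMbr
        (fun x hx => hMsideal x (hHsKs hx)) hHsM hMsH hh hξ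
  refine ⟨fun x hx y hy => ⟨hKiso x (hHK hx) y (hHK hy), hHsub x hx y hy⟩,
    fun x hx y hy => ⟨hKsiso x (hHsKs hx) y (hHsKs hy), hHssub x hx y hy⟩,
    lie_mem_sup_of_lie_mem hHsub hHssub hHHs, fun x hx hxP => ?_⟩
  exact eq_zero_of_apply_eq_zero_of_sup_eq_top B hBnd hPQ hxP (horth x hx)

/-- Under the Manin-triple setup, `H ⊕ H*` with the restricted bracket
and form is itself a Manin triple: `H` and `H*` are isotropic Lie subalgebras of
`H ⊕ H*`, the latter is closed under the bracket, and the restricted bilinear form is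
nondegenerate on `H ⊕ H*`. -/
theorem manin_H_Hstar_is_manin_triple
    {k : Type*} [Field k] [CharZero k]
    {D : Type*} [LieRing D] [LieAlgebra k D]
    (B : D →ₗ[k] D →ₗ[k] k)
    (hBsymm : ∀ x y, B x y = B y x)
    (hBinv : ∀ x y z, B ⁅x, y⁆ z = B x ⁅y, z⁆)
    (hBnd : ∀ x, (∀ y, B x y = 0) → x = 0)
    (K Ks : Submodule k D)
    (hKsub : ∀ x ∈ K, ∀ y ∈ K, ⁅x, y⁆ ∈ K)
    (hKssub : ∀ x ∈ Ks, ∀ y ∈ Ks, ⁅x, y⁆ ∈ Ks)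
    (hKiso : ∀ x ∈ K, ∀ y ∈ K, B x y = 0)
    (hKsiso : ∀ x ∈ Ks, ∀ y ∈ Ks, B x y = 0)
    (hdir : IsCompl K Ks)
    (H M : Submodule k D) (hHK : H ≤ K) (hMK : M ≤ K)
    (hHMinf : H ⊓ M = ⊥) (hHMsup : H ⊔ M = K)
    (hHsub : ∀ x ∈ H, ∀ y ∈ H, ⁅x, y⁆ ∈ H)
    (hHMbr : ∀ x ∈ H, ∀ y ∈ M, ⁅x, y⁆ ∈ M)
    (Hs Ms : Submodule k D)
    (hHs : ∀ x, x ∈ Hs ↔ x ∈ Ks ∧ ∀ m ∈ M, B x m = 0)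
    (hMs : ∀ x, x ∈ Ms ↔ x ∈ Ks ∧ ∀ h ∈ H, B x h = 0)
    (hKsinf : Hs ⊓ Ms = ⊥) (hKssup : Hs ⊔ Ms = Ks)
    (hHssub : ∀ x ∈ Hs, ∀ y ∈ Hs, ⁅x, y⁆ ∈ Hs)
    (hMsideal : ∀ x ∈ Ks, ∀ y ∈ Ms, ⁅x, y⁆ ∈ Ms) :
    (∀ x ∈ H, ∀ y ∈ H, B x y = 0 ∧ ⁅x, y⁆ ∈ H) ∧
    (∀ x ∈ Hs, ∀ y ∈ Hs, B x y = 0 ∧ ⁅x, y⁆ ∈ Hs) ∧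
    (∀ x ∈ H ⊔ Hs, ∀ y ∈ H ⊔ Hs, ⁅x, y⁆ ∈ H ⊔ Hs) ∧
    (∀ x ∈ H ⊔ Hs, (∀ y ∈ H ⊔ Hs, B x y = 0) → x = 0) :=
  manin_H_Hstar_is_manin_triple_general B hBsymm hBinv hBnd K Ks hKiso hKsiso hdir H M hHK hMK
    hHMsup hHsub hHMbr Hs Ms hHs hMs hKssup hHssub hMsideal
end
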